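/- arXiv:2605.20062 — 7 statements merged into one kernel-verified Lean document; each statement's English description precedes it below -/
import Mathlib

section
/- Let A be a finite abelian group whose exponent divides Q − 1, where Q = q^m. A function V from the group of L-valued characters of A to L is the Fourier transform of a (necessarily unique) K-valued function v : A → K if and only if V(χ^q) = V(χ)^q for every character χ : A → Lˣ, where the Fourier transform is v̂(χ) = ∑_{x ∈ A} v(x)·χ(x). -/
open Finset

/-- A nontrivial hom from a finite commutative group into the units of a field has zero sum. -/
private lemma sum_units_hom_eq_zero {B L : Type*} [CommGroup B] [Fintype B] [Field L]
    {f : B →* Lˣ} (hf : f ≠ 1) : ∑ b : B, (f b : L) = 0 := by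
  obtain ⟨a, ha⟩ : ∃ a, f a ≠ 1 := by
    by_contra h
    push_neg at h
    exact hf (MonoidHom.ext fun x => by simp [h x])
  have key : (f a : L) * ∑ b : B, (f b : L) = ∑ b : B, (f b : L) := by
    rw [Finset.mul_sum]
    rw [← Equiv.sum_comp (Equiv.mulLeft a) (fun b => (f b : L))]
    simp [Units.val_mul]
  have h1 : ((f a : L) - 1) * ∑ b : B, (f b : L) = 0 := by
    rw [sub_mul, one_mul, key, sub_self]
  rcases mul_eq_zero.mp h1 with h | h
  · exfalso
    apply ha
    ext
    simpa [sub_eq_zero] using h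
  · exact h

/-- Galois descent for Fourier transforms on finite abelian groups.
`K` is identified with the subfield `{x : L | x ^ q = x}` of `L = GF(q^m)`. -/
theorem stmt_0 (q m : ℕ) (hq : IsPrimePow q) (hm : 0 < m)
    (L : Type*) [Field L] [Fintype L] (hL : Fintype.card L = q ^ m)
    (A : Type*) [CommGroup A] [Fintype A]
    (hA : Monoid.exponent A ∣ q ^ m - 1)
    (V : (A →* Lˣ) → L) :
    (∃! v : A → L, (∀ x, v x ^ q = v x) ∧
        ∀ χ : A →* Lˣ, V χ = ∑ x : A, v x * (χ x : L)) ↔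
      ∀ χ : A →* Lˣ, V (χ ^ q) = V χ ^ q := by
  classical
  obtain ⟨p, k, hp, hk, hpk⟩ := hq
  have hp' : p.Prime := hp.nat_prime
  have hq2 : 2 ≤ q := hpk ▸ hp'.two_le.trans (Nat.le_self_pow hk.ne' p)
  have hQ1 : 1 < q ^ m := Nat.one_lt_pow hm.ne' (by omega)
  -- characteristic of `L` is `p`
  have hchar : CharP L p := by
    have h1 : CharP L (ringChar L) := ringChar.charP L
    obtain ⟨n, hr, hcard⟩ := FiniteField.card L (ringChar L)
    have hpr : p = ringChar L := by
      have hd : p ∣ ringChar L ^ (n : ℕ) := by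
        rw [← hcard, hL, ← hpk, ← pow_mul]
        exact dvd_pow_self p (by positivity)
      exact (Nat.prime_dvd_prime_iff_eq hp' hr).mp (hp'.dvd_of_dvd_pow hd)
    rwa [hpr]
  haveI := hchar
  haveI : ExpChar L p := ExpChar.prime hp'
  -- the `q`-power Frobenius of `L`
  set F : L →+* L := iterateFrobenius L p k with hF
  have hFapp : ∀ x : L, F x = x ^ q := fun x => by
    rw [hF, iterateFrobenius_def, hpk]
  -- `L` has enough roots of unity
  haveI hEnough : HasEnoughRootsOfUnity L (Monoid.exponent A) := by
    constructor
    · obtain ⟨g, hg⟩ := IsCyclic.exists_ofOrder_eq_natCard (α := Lˣ)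
      have hgcard : orderOf g = q ^ m - 1 := by
        rw [hg, Nat.card_eq_fintype_card, Fintype.card_units, hL]
      have hprim : IsPrimitiveRoot g (q ^ m - 1) := hgcard ▸ IsPrimitiveRoot.orderOf g
      have hfac : q ^ m - 1 = (q ^ m - 1) / Monoid.exponent A * Monoid.exponent A :=
        (Nat.div_mul_cancel hA).symm
      have hpow := hprim.pow (by omega) hfac
      exact ⟨((g ^ ((q ^ m - 1) / Monoid.exponent A) : Lˣ) : L),
        IsPrimitiveRoot.coe_units_iff.mpr hpow⟩
    · infer_instance
  haveI : Finite (A →* Lˣ) :=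
    Finite.of_injective (fun f => (f : A → Lˣ)) DFunLike.coe_injective
  haveI : Fintype (A →* Lˣ) := Fintype.ofFinite _
  -- cardinality of the character group
  have hcard : Fintype.card (A →* Lˣ) = Fintype.card A := by
    obtain ⟨e⟩ := CommGroup.monoidHom_mulEquiv_of_hasEnoughRootsOfUnity A L
    exact Fintype.card_congr e.toEquiv
  -- separation
  have hsep : ∀ x : A, x ≠ 1 → ∃ χ : A →* Lˣ, χ x ≠ 1 := fun x hx =>
    CommGroup.exists_apply_ne_one_of_hasEnoughRootsOfUnity A L hx
  -- `card A ≠ 0` in `L`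
  haveI : Fact p.Prime := ⟨hp'⟩
  have hpN : ¬ (p ∣ Fintype.card A) := by
    intro hdvd
    obtain ⟨a, ha⟩ := exists_prime_orderOf_dvd_card p hdvd
    have h1 : p ∣ q ^ m - 1 := ha ▸ (Monoid.order_dvd_exponent a).trans hA
    have h2 : p ∣ q ^ m := by
      rw [← hpk, ← pow_mul]; exact dvd_pow_self p (by positivity)
    have h3 : p ∣ 1 := by
      have := Nat.dvd_sub h2 h1
      rwa [Nat.sub_sub_self (le_of_lt hQ1)] at this
    exact hp'.one_lt.ne' (Nat.dvd_one.mp h3)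
  have hN : (Fintype.card A : L) ≠ 0 := by
    rw [Ne, CharP.cast_eq_zero_iff L p]
    exact hpN
  -- orthogonality relations
  have orth1 : ∀ χ : A →* Lˣ, χ ≠ 1 → ∑ x : A, (χ x : L) = 0 := fun χ h =>
    sum_units_hom_eq_zero h
  have orth2 : ∀ x : A, x ≠ 1 → ∑ χ : A →* Lˣ, (χ x : L) = 0 := by
    intro x hx
    obtain ⟨χ₀, hχ₀⟩ := hsep x hx
    have hfne : (MonoidHom.eval (N := Lˣ) x) ≠ 1 := by
      intro h
      exact hχ₀ (by simpa using DFunLike.congr_fun h χ₀)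
    simpa using sum_units_hom_eq_zero hfne
  have orth2' : ∀ x : A, ∑ χ : A →* Lˣ, (χ x : L) =
      if x = 1 then (Fintype.card A : L) else 0 := by
    intro x
    by_cases hx : x = 1
    · simp [hx, ← hcard]
    · simp [hx, orth2 x hx]
  -- coprimality and bijectivity of the q-power map on characters
  have hcop : (Nat.card (A →* Lˣ)).Coprime q := by
    rw [Nat.card_eq_fintype_card, hcard, ← hpk]
    exact ((hp'.coprime_iff_not_dvd.mpr hpN).symm).pow_right k
  have hbij : Function.Bijective (fun χ : A →* Lˣ => χ ^ q) :=
    hcop.pow_left_bijective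
  -- injectivity of the Fourier transform on all of `A → L`
  have inj : ∀ u w : A → L,
      (∀ χ : A →* Lˣ, ∑ x : A, u x * (χ x : L) = ∑ x : A, w x * (χ x : L)) → u = w := by
    intro u w h
    funext y
    set d : A → L := fun x => u x - w x with hd
    have hd0 : ∀ χ : A →* Lˣ, ∑ x : A, d x * (χ x : L) = 0 := by
      intro χ
      simp only [hd, sub_mul, Finset.sum_sub_distrib, h χ, sub_self]
    have calc1 : (0 : L) = ∑ x : A, d x * ∑ χ : A →* Lˣ, (χ (x * y⁻¹) : L) := by
      have h0 : (0 : L) = ∑ χ : A →* Lˣ, (∑ x : A, d x * (χ x : L)) * ((χ y⁻¹ : Lˣ) : L) := by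
        simp [hd0]
      rw [h0]
      calc ∑ χ : A →* Lˣ, (∑ x : A, d x * (χ x : L)) * ((χ y⁻¹ : Lˣ) : L)
          = ∑ χ : A →* Lˣ, ∑ x : A, d x * (χ (x * y⁻¹) : L) := by
            refine Finset.sum_congr rfl fun χ _ => ?_
            rw [Finset.sum_mul]
            refine Finset.sum_congr rfl fun x _ => ?_
            rw [map_mul, Units.val_mul, mul_assoc]
        _ = ∑ x : A, ∑ χ : A →* Lˣ, d x * (χ (x * y⁻¹) : L) := Finset.sum_comm
        _ = ∑ x : A, d x * ∑ χ : A →* Lˣ, (χ (x * y⁻¹) : L) := by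
            simp [Finset.mul_sum]
    have calc2 : (0 : L) = d y * (Fintype.card A : L) := by
      rw [calc1]
      have hstep : ∀ x : A, d x * (if x * y⁻¹ = 1 then (Fintype.card A : L) else 0)
          = if x = y then d y * (Fintype.card A : L) else 0 := by
        intro x
        by_cases hxy : x = y <;> simp [hxy, mul_inv_eq_one]
      simp only [orth2', hstep, Finset.sum_ite_eq' Finset.univ y, Finset.mem_univ, if_true]
    have hdy : d y = 0 := by
      rcases mul_eq_zero.mp calc2.symm with h' | h'
      · exact h'
      · exact absurd h' hN
    exact sub_eq_zero.mp hdy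
  constructor
  · -- forward direction
    rintro ⟨v, ⟨hvq, hvF⟩, -⟩ χ
    rw [hvF (χ ^ q), hvF χ, ← hFapp, map_sum]
    refine Finset.sum_congr rfl fun x _ => ?_
    rw [map_mul, hFapp, hFapp, hvq]
    simp [Units.val_pow_eq_pow_val]
  · -- backward direction: Fourier inversion
    intro hV
    set v : A → L := fun x =>
      (Fintype.card A : L)⁻¹ * ∑ χ : A →* Lˣ, V χ * ((χ x⁻¹ : Lˣ) : L) with hv
    have key : ∀ χ : A →* Lˣ, ∑ x : A, v x * (χ x : L) = V χ := by
      intro χ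
      have step1 : ∀ x : A, v x * (χ x : L)
          = ∑ ψ : A →* Lˣ, (Fintype.card A : L)⁻¹ * V ψ * ((χ * ψ⁻¹) x : L) := by
        intro x
        rw [hv]
        simp only [Finset.mul_sum, Finset.sum_mul]
        refine Finset.sum_congr rfl fun ψ _ => ?_
        simp only [MonoidHom.mul_apply, MonoidHom.inv_apply, Units.val_mul, map_inv]
        ring
      rw [Finset.sum_congr rfl fun x _ => step1 x, Finset.sum_comm]
      have step2 : ∀ ψ : A →* Lˣ,
          ∑ x : A, (Fintype.card A : L)⁻¹ * V ψ * ((χ * ψ⁻¹) x : L)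
          = if ψ = χ then V χ else 0 := by
        intro ψ
        rw [← Finset.mul_sum]
        by_cases hψ : ψ = χ
        · subst hψ
          have hsum : ∑ x : A, ((ψ * ψ⁻¹) x : L) = (Fintype.card A : L) := by simp
          rw [hsum, if_pos rfl, mul_right_comm, inv_mul_cancel₀ hN, one_mul]
        · have hne : χ * ψ⁻¹ ≠ 1 :=
            fun h => hψ (mul_inv_eq_one.mp h).symm
          rw [orth1 _ hne, mul_zero, if_neg hψ]
      rw [Finset.sum_congr rfl fun ψ _ => step2 ψ]
      simp
    refine ⟨v, ⟨?_, fun χ => (key χ).symm⟩, ?_⟩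
    · -- v takes values in the subfield fixed by x ↦ x ^ q
      intro x
      rw [← hFapp, hv]
      simp only
      rw [map_mul, map_inv₀, map_natCast, map_sum]
      congr 1
      refine Fintype.sum_bijective (fun χ : A →* Lˣ => χ ^ q) hbij _ _ fun χ => ?_
      show F (V χ * ((χ x⁻¹ : Lˣ) : L)) = V (χ ^ q) * (((χ ^ q) x⁻¹ : Lˣ) : L)
      rw [map_mul, hFapp, hFapp, ← hV]
      simp [Units.val_pow_eq_pow_val]
    · -- uniqueness
      rintro w ⟨-, hwF⟩
      exact inj w v fun χ => by rw [← hwF χ, key χ]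
end

section
/- Let n divide Q − 1 and let ω ∈ Lˣ have multiplicative order n. A vector V ∈ L^n is the discrete Fourier transform V_s = ∑_{i=0}^{n−1} v_i ω^{is} of a unique vector v ∈ K^n if and only if V_{qs mod n} = V_s^q for all s ∈ ℤ/nℤ. In particular the set S_n = {V ∈ L^n : V_{qi mod n} = V_i^q for all i} is exactly the image of K^n under the DFT. -/
/-!
The Frobenius `φ x = x ^ q` is a ring endomorphism of `L` with `φ ω = ω ^ q`, so applying it
termwise gives `φ (V s) = (DFT of φ ∘ v) (q s)`. By orthogonality of the characters
`s ↦ ω ^ (i s)` the DFT is invertible (`n` is prime to the characteristic), and `s ↦ q s` permutes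
`ℤ/nℤ` because `q ^ m ≡ 1 mod n`. Hence `V (q s) = φ (V s)` for all `s` iff
`DFT (φ ∘ v) = DFT v` iff `φ ∘ v = v`.
-/

open Finset AddChar

section DFT

variable {R L : Type*} [CommRing R] [Fintype R] [Field L] (ψ : AddChar R L)

/-- For `R = ZMod n` and `ψ = zmodChar n _`, i.e. `ψ a = ω ^ a.val`, this is the DFT of the
statement. -/
def dft : (R → L) →ₗ[L] (R → L) where
  toFun v s := ∑ i, v i * ψ (i * s)
  map_add' v w := by ext s; simp only [Pi.add_apply, add_mul, sum_add_distrib]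
  map_smul' c v := by ext s; simp [mul_assoc, mul_sum]

lemma dft_apply (v : R → L) (s : R) : dft ψ v s = ∑ i, v i * ψ (i * s) := rfl

variable {ψ}

lemma sum_dft_mul_neg [DecidableEq R] (hψ : ψ.IsPrimitive) (v : R → L) (j : R) :
    ∑ s, dft ψ v s * ψ (-j * s) = Fintype.card R * v j := by
  have hkernel : ∀ i s, ψ (i * s) * ψ (-j * s) = ψ (s * (i - j)) := fun i s => by
    rw [← map_add_eq_mul]; ring_nf
  simp_rw [dft_apply, sum_mul, mul_assoc, hkernel]
  rw [sum_comm]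
  simp_rw [← mul_sum, sum_mulShift _ hψ, sub_eq_zero]
  simp [mul_comm]

lemma dft_injective (hψ : ψ.IsPrimitive) (hR : (Fintype.card R : L) ≠ 0) :
    Function.Injective (dft ψ) := by
  classical
  intro v w hvw
  funext j
  have h := sum_dft_mul_neg hψ v j
  rw [hvw, sum_dft_mul_neg hψ w j] at h
  exact (mul_left_cancel₀ hR h).symm

lemma dft_bijective (hψ : ψ.IsPrimitive) (hR : (Fintype.card R : L) ≠ 0) :
    Function.Bijective (dft ψ) :=
  ⟨dft_injective hψ hR, LinearMap.injective_iff_surjective.mp (dft_injective hψ hR)⟩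

lemma map_dft (φ : L →+* L) {c : R} (hφ : ∀ x, φ (ψ x) = ψ (c * x)) (v : R → L) (s : R) :
    φ (dft ψ v s) = dft ψ (φ ∘ v) (c * s) := by
  simp only [dft_apply, map_sum, map_mul, hφ, Function.comp_apply, mul_left_comm c]

theorem setOf_apply_mul_eq_map_eq_image_dft (hψ : ψ.IsPrimitive)
    (hR : (Fintype.card R : L) ≠ 0) (φ : L →+* L) {c : R} (hc : IsUnit c)
    (hφ : ∀ x, φ (ψ x) = ψ (c * x)) :
    {V : R → L | ∀ s, V (c * s) = φ (V s)} = dft ψ '' {v | ∀ i, φ (v i) = v i} := by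
  ext V
  constructor
  · intro hV
    obtain ⟨v, rfl⟩ := (dft_bijective hψ hR).surjective V
    have hfix : dft ψ (φ ∘ v) = dft ψ v := funext fun t => by
      obtain ⟨s, rfl⟩ : ∃ s, c * s = t :=
        ⟨hc.unit⁻¹ * t, by rw [← mul_assoc, hc.mul_val_inv, one_mul]⟩
      rw [← map_dft φ hφ, ← hV]
    exact ⟨v, congrFun (dft_injective hψ hR hfix), rfl⟩
  · rintro ⟨v, hv, rfl⟩ s
    rw [map_dft φ hφ, show φ ∘ v = v from funext hv]

end DFT

lemma isUnit_natCast_of_dvd_pow_sub_one {q m n : ℕ} (hq : 0 < q) (hm : m ≠ 0)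
    (hn : n ∣ q ^ m - 1) : IsUnit (q : ZMod n) := by
  refine IsUnit.of_pow_eq_one ?_ hm
  have h : 1 ≡ q ^ m [MOD n] := (Nat.modEq_iff_dvd' (Nat.one_le_pow _ _ hq)).mpr hn
  exact_mod_cast ((ZMod.natCast_eq_natCast_iff _ _ _).mpr h).symm

/-- the Frobenius relation characterizes DFT spectra of base-field vectors. -/
theorem stmt_1 (q m n : ℕ) (hq : IsPrimePow q) (hm : 0 < m)
    (L : Type*) [Field L] [Fintype L] (hL : Fintype.card L = q ^ m)
    [NeZero n] (hn : n ∣ q ^ m - 1)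
    (ω : L) (hω : orderOf ω = n) :
    (∀ V : ZMod n → L,
      (∃! v : ZMod n → L, (∀ i, v i ^ q = v i) ∧
          ∀ s : ZMod n, V s = ∑ i : ZMod n, v i * ω ^ (i * s).val) ↔
        ∀ s : ZMod n, V ((q : ZMod n) * s) = V s ^ q) ∧
    {V : ZMod n → L | ∀ i : ZMod n, V ((q : ZMod n) * i) = V i ^ q} =
      (fun (v : ZMod n → L) (s : ZMod n) => ∑ i : ZMod n, v i * ω ^ (i * s).val) ''
        {v : ZMod n → L | ∀ i, v i ^ q = v i} := by
  obtain ⟨p, k, hp, -, rfl⟩ := hq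
  have hp : p.Prime := Nat.prime_iff.mpr hp
  have : Fact p.Prime := ⟨hp⟩
  have : CharP L p := charP_of_card_eq_prime_pow (by rw [hL, ← pow_mul])
  have : ExpChar L p := ExpChar.prime hp
  have hprim : IsPrimitiveRoot ω n := hω ▸ IsPrimitiveRoot.orderOf ω
  set ψ := zmodChar n hprim.pow_eq_one
  have hψ : ψ.IsPrimitive := zmodChar_primitive_of_primitive_root n hprim
  have hR : (Fintype.card (ZMod n) : L) ≠ 0 := by
    rw [ZMod.card]; exact hprim.neZero'.out
  have hφ : ∀ x, iterateFrobenius L p k (ψ x) = ψ ((p ^ k : ℕ) * x) := fun x => by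
    rw [iterateFrobenius_def, ← map_nsmul_eq_pow, nsmul_eq_mul]
  have hrange := setOf_apply_mul_eq_map_eq_image_dft hψ hR (iterateFrobenius L p k)
    (isUnit_natCast_of_dvd_pow_sub_one (pow_pos hp.pos k) hm.ne' hn) hφ
  refine ⟨fun V => ?_, hrange⟩
  change _ ↔ V ∈ {V : ZMod n → L | ∀ s, V ((p ^ k : ℕ) * s) = iterateFrobenius L p k (V s)}
  rw [hrange]
  constructor
  · rintro ⟨v, ⟨hv, hV⟩, -⟩
    exact ⟨v, hv, funext fun s => (hV s).symm⟩
  · rintro ⟨v, hv, rfl⟩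
    exact ⟨v, ⟨hv, fun s => rfl⟩,
      fun w hw => dft_injective hψ hR (funext fun s => (hw.2 s).symm)⟩
end

section
/- Let C_1, …, C_r be the q-cyclotomic classes modulo n with representatives c_k and lengths ℓ_k = |C_k|. Suppose f ∈ L^n satisfies f_{qi mod n} = f_i^q for all i ∈ ℤ/nℤ. Then for every j, the DFT value F_j = ∑_{i=0}^{n−1} f_i ω^{ij} satisfies F_j = ∑_{k=1}^r Tr_{GF(q^{ℓ_k})/K}((ω^{c_k})^j · f_{c_k}), where ω^{c_k} and f_{c_k} lie in the subfield GF(q^{ℓ_k}) of L and Tr denotes the field trace from GF(q^{ℓ_k}) to K. In particular F_j ∈ K for all j. -/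
open scoped Classical

/-- trace decomposition of the DFT of a class-consistent vector.
`R` is a set of representatives (leaders) of the `q`-cyclotomic classes modulo `n`,
and the length of the class of `c` is `Function.minimalPeriod (fun x => q * x) c`.
The trace `Tr_{GF(q^ℓ)/K}(x) = ∑_{t<ℓ} x^{q^t}`, and membership in `K` is expressed
by being fixed by the `q`-power Frobenius. -/
theorem stmt_7 (q m n : ℕ) (hq : IsPrimePow q) (hm : 0 < m)
    (L : Type*) [Field L] [Fintype L] (hL : Fintype.card L = q ^ m)
    [NeZero n] (hn : n ∣ q ^ m - 1)
    (ω : L) (hω : orderOf ω = n)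
    (R : Finset (ZMod n))
    (hR : ∀ s : ZMod n, ∃! c, c ∈ R ∧ ∃ t : ℕ, s = (q : ZMod n) ^ t * c)
    (f : ZMod n → L) (hf : ∀ i, f ((q : ZMod n) * i) = f i ^ q) :
    (∀ c ∈ R,
      (ω ^ (c : ZMod n).val) ^
          q ^ Function.minimalPeriod (fun x : ZMod n => (q : ZMod n) * x) c =
        ω ^ (c : ZMod n).val ∧
      f c ^ q ^ Function.minimalPeriod (fun x : ZMod n => (q : ZMod n) * x) c = f c) ∧
    ∀ j : ZMod n,
      ((∑ i : ZMod n, f i * ω ^ (i * j).val) =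
        ∑ c ∈ R,
          ∑ t ∈ Finset.range
              (Function.minimalPeriod (fun x : ZMod n => (q : ZMod n) * x) c),
            ((ω ^ (c : ZMod n).val) ^ j.val * f c) ^ q ^ t) ∧
      (∑ i : ZMod n, f i * ω ^ (i * j).val) ^ q =
        ∑ i : ZMod n, f i * ω ^ (i * j).val := by
  -- basic numerology
  have hq2 : 2 ≤ q := hq.two_le
  set F : ZMod n → ZMod n := fun x => (q : ZMod n) * x with hF
  set ℓ : ZMod n → ℕ := fun c => Function.minimalPeriod F c with hℓ
  -- q^m = 1 in ZMod n
  have hq1 : (q : ZMod n) ^ m = 1 := by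
    have h1 : 1 ≤ q ^ m := Nat.one_le_pow _ _ (by omega)
    have h0 : ((q ^ m - 1 : ℕ) : ZMod n) = 0 := (ZMod.natCast_eq_zero_iff _ _).mpr hn
    have h2 : ((q ^ m : ℕ) : ZMod n) = ((q ^ m - 1 + 1 : ℕ) : ZMod n) := by
      congr 1
      omega
    rw [Nat.cast_add, Nat.cast_one, h0, zero_add] at h2
    rw [← h2]
    push_cast
    ring
  -- iterates of F
  have hiter : ∀ (t : ℕ) (c : ZMod n), F^[t] c = (q : ZMod n) ^ t * c := by
    intro t c
    simp [hF, mul_left_iterate]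
  have hper : ∀ c : ZMod n, Function.IsPeriodicPt F m c := by
    intro c
    unfold Function.IsPeriodicPt Function.IsFixedPt
    rw [hiter, hq1, one_mul]
  have hℓpos : ∀ c : ZMod n, 0 < ℓ c := fun c => (hper c).minimalPeriod_pos hm
  have hℓper : ∀ c : ZMod n, (q : ZMod n) ^ ℓ c * c = c := by
    intro c
    have := Function.isPeriodicPt_minimalPeriod F c
    rwa [Function.IsPeriodicPt, Function.IsFixedPt, hiter] at this
  -- ω powers vs ZMod values
  have hωpow : ∀ (k : ℕ) (a : ZMod n), ω ^ ((k : ZMod n) * a).val = (ω ^ a.val) ^ k := by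
    intro k a
    rw [← pow_mul]
    have hmod : ((((k : ZMod n) * a).val : ℕ) : ZMod n) = ((a.val * k : ℕ) : ZMod n) := by
      push_cast [ZMod.natCast_val, ZMod.cast_id]
      ring
    have hmeq : ((k : ZMod n) * a).val % n = (a.val * k) % n := by
      have := (ZMod.natCast_eq_natCast_iff _ _ _).mp hmod
      exact this
    rw [← pow_mod_orderOf ω (((k : ZMod n) * a).val), ← pow_mod_orderOf ω (a.val * k), hω, hmeq]
  -- iterated hf
  have hfit : ∀ (t : ℕ) (i : ZMod n), f ((q : ZMod n) ^ t * i) = f i ^ q ^ t := by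
    intro t
    induction t with
    | zero => simp
    | succ t ih =>
      intro i
      have : (q : ZMod n) ^ (t + 1) * i = (q : ZMod n) * ((q : ZMod n) ^ t * i) := by ring
      rw [this, hf, ih, ← pow_mul, pow_succ]
  -- Part 1
  have part1 : ∀ c : ZMod n,
      (ω ^ c.val) ^ q ^ ℓ c = ω ^ c.val ∧ f c ^ q ^ ℓ c = f c := by
    intro c
    constructor
    · have h := hωpow (q ^ ℓ c) c
      rw [show (((q ^ ℓ c : ℕ)) : ZMod n) = (q : ZMod n) ^ ℓ c by push_cast; ring,
        hℓper c] at h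
      exact h.symm
    · have h := hfit (ℓ c) c
      rw [hℓper c] at h
      exact h.symm
  refine ⟨fun c _ => part1 c, fun j => ?_⟩
  -- the common term rewrite
  have hterm : ∀ (c : ZMod n) (t : ℕ),
      f ((q : ZMod n) ^ t * c) * ω ^ (((q : ZMod n) ^ t * c) * j).val =
        ((ω ^ c.val) ^ j.val * f c) ^ q ^ t := by
    intro c t
    have h1 : (((q : ZMod n) ^ t * c) * j) = ((q ^ t : ℕ) : ZMod n) * (c * j) := by
      push_cast; ring
    have h2 : (c * j) = ((j.val : ℕ) : ZMod n) * c := by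
      rw [ZMod.natCast_val, ZMod.cast_id]; ring
    rw [h1, hωpow, hfit, h2, hωpow, mul_pow, mul_comm]
  -- Part 2a : reindex the sum
  have part2a : (∑ i : ZMod n, f i * ω ^ (i * j).val) =
      ∑ c ∈ R, ∑ t ∈ Finset.range (ℓ c), ((ω ^ c.val) ^ j.val * f c) ^ q ^ t := by
    rw [Finset.sum_sigma']
    refine (Finset.sum_bij (fun p _ => (q : ZMod n) ^ p.2 * p.1) ?_ ?_ ?_ ?_).symm
    · intro p _; exact Finset.mem_univ _
    · rintro ⟨c, t⟩ hp ⟨c', t'⟩ hp' h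
      simp only [Finset.mem_sigma, Finset.mem_range] at hp hp'
      obtain ⟨hcR, ht⟩ := hp
      obtain ⟨hcR', ht'⟩ := hp'
      have h2 : (q : ZMod n) ^ t * c = (q : ZMod n) ^ t' * c' := h
      obtain ⟨c₀, -, huniq⟩ := hR ((q : ZMod n) ^ t * c)
      have e1 : c = c₀ := huniq c ⟨hcR, t, rfl⟩
      have e2 : c' = c₀ := huniq c' ⟨hcR', t', h2⟩
      have hc : c = c' := e1.trans e2.symm
      subst hc
      have hFt : F^[t] c = F^[t'] c := by rw [hiter, hiter]; exact h2
      have := Function.iterate_injOn_Iio_minimalPeriod (f := F) (x := c)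
        (Set.mem_Iio.mpr ht) (Set.mem_Iio.mpr ht') hFt
      simp [this]
    · intro b _
      obtain ⟨c, ⟨hcR, t, hbct⟩, -⟩ := hR b
      refine ⟨⟨c, t % ℓ c⟩, Finset.mem_sigma.mpr ⟨hcR, Finset.mem_range.mpr
        (Nat.mod_lt _ (hℓpos c))⟩, ?_⟩
      have h3 : F^[t % ℓ c] c = F^[t] c := Function.iterate_mod_minimalPeriod_eq
      rw [hiter, hiter] at h3
      show (q : ZMod n) ^ (t % ℓ c) * c = b
      rw [hbct]
      exact h3
    · rintro ⟨c, t⟩ _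
      exact (hterm c t).symm
  refine ⟨part2a, ?_⟩
  -- characteristic
  obtain ⟨p, e, hp, he, hpe⟩ := hq
  have hp' : p.Prime := hp.nat_prime
  haveI : Fact p.Prime := ⟨hp'⟩
  have hcharP : CharP L p := by
    haveI hch : CharP L (ringChar L) := ringChar.charP L
    have hrp : (ringChar L).Prime := CharP.char_is_prime L (ringChar L)
    obtain ⟨k, -, hk⟩ := FiniteField.card L (ringChar L)
    have : p ^ (e * m) = (ringChar L) ^ (k : ℕ) := by
      rw [← hk, hL, ← hpe, pow_mul]
    have hdvd : p ∣ (ringChar L) ^ (k : ℕ) := by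
      rw [← this]
      exact dvd_pow_self p (by positivity)
    have : p = ringChar L := ((Nat.prime_dvd_prime_iff_eq hp' hrp).mp
      (hp'.dvd_of_dvd_pow hdvd))
    rw [this]; exact hch
  haveI := hcharP
  -- Frobenius hom x ↦ x ^ q
  have hq' : ∀ x : L, (iterateFrobenius L p e) x = x ^ q := by
    intro x
    rw [iterateFrobenius_def, hpe]
  -- mul by q is bijective on ZMod n
  have hkey : ∀ x : ZMod n, (q : ZMod n) ^ (m - 1) * ((q : ZMod n) * x) = x := by
    intro x
    rw [← mul_assoc, ← pow_succ, show m - 1 + 1 = m by omega, hq1, one_mul]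
  have hinj : Function.Injective (fun i : ZMod n => (q : ZMod n) * i) := by
    intro a b h
    have h' : (q : ZMod n) * a = (q : ZMod n) * b := h
    rw [← hkey a, h', hkey b]
  have hbij : Function.Bijective (fun i : ZMod n => (q : ZMod n) * i) :=
    (Finite.injective_iff_bijective).mp hinj
  -- F_j ^ q = F_j
  have : (∑ i : ZMod n, f i * ω ^ (i * j).val) ^ q =
      ∑ i : ZMod n, f ((q : ZMod n) * i) * ω ^ (((q : ZMod n) * i) * j).val := by
    rw [← hq', map_sum]
    refine Finset.sum_congr rfl fun i _ => ?_
    rw [hq', mul_pow, hf]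
    congr 1
    have h1 : (((q : ZMod n) * i) * j) = ((q : ℕ) : ZMod n) * (i * j) := by ring
    rw [h1, hωpow]
  rw [this]
  exact Fintype.sum_bijective _ hbij _ _ (fun i => rfl)
end

section
/- For every g ∈ L^n, the minimum symbol support of a residual over the Frobenius-consistent code satisfies min_{f ∈ F_n} |{i : g_i ≠ f_i}| = ∑_{C ∈ 𝒞_q(n)} (|C| − max_{b ∈ GF(q^{|C|})} |{t : x_{C,t} = b}|), where for each class C with leader c the normalized values are x_{C,t} = (g_{q^t c mod n})^{q^{m−t}}, t = 0, …, |C|−1. -/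
open scoped Classical

open Function in
private lemma iterMul {M : Type*} [Monoid M] (a : M) (t : ℕ) (x : M) :
    (fun y => a * y)^[t] x = a ^ t * x := by
  induction t with
  | zero => simp
  | succ t ih => rw [Function.iterate_succ_apply', ih, pow_succ', mul_assoc]

private lemma powPowMod {L : Type*} [Monoid L] (q ℓ : ℕ) (b : L)
    (hb : b ^ q ^ ℓ = b) (u : ℕ) : b ^ q ^ u = b ^ q ^ (u % ℓ) := by
  have hmul : ∀ k, b ^ q ^ (ℓ * k) = b := by
    intro k
    induction k with
    | zero => simp
    | succ k ih =>
        rw [Nat.mul_succ, pow_add, pow_mul, ih, hb]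
  conv_lhs => rw [← Nat.div_add_mod u ℓ, pow_add, pow_mul, hmul]

/-- global residual support minimization over the Frobenius-consistent
code `F_n` separates over the `q`-cyclotomic classes. `R` is a set of leaders, one per
class, the length of the class of `c` is `Function.minimalPeriod (fun x => q * x) c`,
and the normalized values are `x_{C,t} = g_{q^t c}^{q^{m-t}}`. -/
theorem stmt_12 (q m n : ℕ) (hq : IsPrimePow q) (hm : 0 < m)
    (L : Type*) [Field L] [Fintype L] (hL : Fintype.card L = q ^ m)
    [NeZero n] (hn : n ∣ q ^ m - 1)
    (R : Finset (ZMod n))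
    (hR : ∀ s : ZMod n, ∃! c, c ∈ R ∧ ∃ t : ℕ, s = (q : ZMod n) ^ t * c)
    (g : ZMod n → L) :
    sInf {k : ℕ | ∃ f : ZMod n → L,
        (∀ i, f ((q : ZMod n) * i) = f i ^ q) ∧
        k = (Finset.univ.filter (fun i : ZMod n => g i ≠ f i)).card} =
      ∑ c ∈ R,
        (Function.minimalPeriod (fun x : ZMod n => (q : ZMod n) * x) c -
          sSup {k : ℕ | ∃ b : L,
            b ^ q ^ Function.minimalPeriod (fun x : ZMod n => (q : ZMod n) * x) c = b ∧
            k = ((Finset.range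
                (Function.minimalPeriod (fun x : ZMod n => (q : ZMod n) * x) c)).filter
              (fun t => (g ((q : ZMod n) ^ t * c)) ^ q ^ (m - t) = b)).card}) := by
  classical
  have hq2 : 2 ≤ q := hq.two_le
  set F : ZMod n → ZMod n := fun x => (q : ZMod n) * x with hF
  set ℓ : ZMod n → ℕ := fun c => Function.minimalPeriod F c with hℓ
  -- (q : ZMod n)^m = 1
  have hqm1 : (q : ZMod n) ^ m = 1 := by
    have h0 : ((q ^ m - 1 : ℕ) : ZMod n) = 0 :=
      (ZMod.natCast_eq_zero_iff _ _).mpr hn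
    have h1 : q ^ m = (q ^ m - 1) + 1 := by
      have := Nat.one_le_pow m q (by omega); omega
    calc (q : ZMod n) ^ m = ((q ^ m : ℕ) : ZMod n) := by push_cast; ring
      _ = (((q ^ m - 1) + 1 : ℕ) : ZMod n) := by rw [← h1]
      _ = 1 := by push_cast [h0]; ring
  have hper : ∀ c : ZMod n, Function.IsPeriodicPt F m c := by
    intro c
    show F^[m] c = c
    rw [hF, iterMul, hqm1, one_mul]
  have hLpos : ∀ c, 0 < ℓ c := fun c => (hper c).minimalPeriod_pos hm
  have hLdvd : ∀ c, ℓ c ∣ m := fun c => (hper c).minimalPeriod_dvd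
  have hLle : ∀ c, ℓ c ≤ m := fun c => Nat.le_of_dvd hm (hLdvd c)
  have hstep : ∀ c : ZMod n, (q : ZMod n) ^ (ℓ c) * c = c := by
    intro c
    have := Function.isPeriodicPt_minimalPeriod F c
    rwa [Function.IsPeriodicPt, Function.IsFixedPt, hF, iterMul] at this
  -- reduction of exponents mod ℓ c
  have hmod : ∀ (c : ZMod n) (t : ℕ),
      (q : ZMod n) ^ t * c = (q : ZMod n) ^ (t % ℓ c) * c := by
    intro c t
    have hmul : ∀ k, (q : ZMod n) ^ (ℓ c * k) * c = c := by
      intro k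
      induction k with
      | zero => simp
      | succ k ih => rw [Nat.mul_succ, pow_add, mul_assoc, hstep, ih]
    conv_lhs => rw [← Nat.div_add_mod t (ℓ c), Nat.add_comm, pow_add, mul_assoc, hmul]
  -- injectivity on range (ℓ c)
  have hinjOn : ∀ c : ZMod n,
      Set.InjOn (fun t => (q : ZMod n) ^ t * c) (Finset.range (ℓ c)) := by
    intro c
    have h := Function.iterate_injOn_Iio_minimalPeriod (f := F) (x := c)
    have he : (fun t => F^[t] c) = fun t => (q : ZMod n) ^ t * c := by
      funext t; rw [hF, iterMul]
    rw [he] at h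
    simpa [Finset.coe_range] using h
  -- frobenius facts
  have hpowm : ∀ x : L, x ^ q ^ m = x := by
    intro x; rw [← hL]; exact FiniteField.pow_card x
  have hinj : ∀ t, t ≤ m → Function.Injective (fun x : L => x ^ q ^ (m - t)) := by
    intro t ht x y hxy
    have h2 := congrArg (fun z : L => z ^ q ^ t) hxy
    simp only [← pow_mul, ← pow_add] at h2
    rw [Nat.sub_add_cancel ht, hpowm, hpowm] at h2
    exact h2
  -- agreement equivalence
  have hagree : ∀ (c : ZMod n) (t : ℕ) (b : L), t ≤ m →
      (g ((q : ZMod n) ^ t * c) = b ^ q ^ t ↔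
        (g ((q : ZMod n) ^ t * c)) ^ q ^ (m - t) = b) := by
    intro c t b ht
    constructor
    · intro h
      rw [h, ← pow_mul, ← pow_add, Nat.add_sub_cancel' ht, hpowm]
    · intro h
      apply hinj t ht
      show g ((q : ZMod n) ^ t * c) ^ q ^ (m - t) = (b ^ q ^ t) ^ q ^ (m - t)
      rw [h, ← pow_mul, ← pow_add, Nat.add_sub_cancel' ht, hpowm]
  -- orbits
  set O : ZMod n → Finset (ZMod n) :=
    fun c => (Finset.range (ℓ c)).image (fun t => (q : ZMod n) ^ t * c) with hO
  have hcover : (Finset.univ : Finset (ZMod n)) = R.biUnion O := by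
    apply Finset.ext
    intro s
    simp only [Finset.mem_univ, Finset.mem_biUnion, true_iff]
    obtain ⟨c, ⟨hc, t, hs⟩, -⟩ := hR s
    refine ⟨c, hc, ?_⟩
    rw [hO]
    simp only [Finset.mem_image, Finset.mem_range]
    exact ⟨t % ℓ c, Nat.mod_lt _ (hLpos c), by rw [← hmod, ← hs]⟩
  have hdisj : ∀ c ∈ R, ∀ c' ∈ R, c ≠ c' → Disjoint (O c) (O c') := by
    intro c hc c' hc' hne
    rw [Finset.disjoint_left]
    intro s hs hs'
    rw [hO] at hs hs'
    simp only [Finset.mem_image, Finset.mem_range] at hs hs'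
    obtain ⟨t, -, hts⟩ := hs
    obtain ⟨t', -, hts'⟩ := hs'
    obtain ⟨u, -, hu⟩ := hR s
    exact hne ((hu c ⟨hc, t, hts.symm⟩).trans (hu c' ⟨hc', t', hts'.symm⟩).symm)
  -- code functions: iterate property
  have hiter : ∀ f : ZMod n → L, (∀ i, f ((q : ZMod n) * i) = f i ^ q) →
      ∀ (t : ℕ) (i : ZMod n), f ((q : ZMod n) ^ t * i) = f i ^ q ^ t := by
    intro f hf t i
    induction t with
    | zero => simp
    | succ t ih =>
        rw [pow_succ', mul_assoc, hf, ih, ← pow_mul, ← pow_succ]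
  -- per-orbit count for code functions
  have hcount : ∀ f : ZMod n → L, (∀ i, f ((q : ZMod n) * i) = f i ^ q) →
      (Finset.univ.filter (fun i : ZMod n => g i ≠ f i)).card =
        ∑ c ∈ R, (ℓ c -
          ((Finset.range (ℓ c)).filter
            (fun t => (g ((q : ZMod n) ^ t * c)) ^ q ^ (m - t) = f c)).card) := by
    intro f hf
    have h1 : (Finset.univ.filter (fun i : ZMod n => g i ≠ f i)) =
        R.biUnion (fun c => (O c).filter (fun i => g i ≠ f i)) := by
      rw [← Finset.filter_biUnion, ← hcover]
    rw [h1, Finset.card_biUnion (fun c hc c' hc' hne =>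
      Finset.disjoint_filter_filter (hdisj c hc c' hc' hne))]
    apply Finset.sum_congr rfl
    intro c hc
    have h2 : (O c).filter (fun i => g i ≠ f i) =
        ((Finset.range (ℓ c)).filter
          (fun t => g ((q : ZMod n) ^ t * c) ≠ f ((q : ZMod n) ^ t * c))).image
          (fun t => (q : ZMod n) ^ t * c) := by
      rw [hO, Finset.filter_image]
    rw [h2, Finset.card_image_of_injOn ((hinjOn c).mono (by
      intro t ht
      simp only [Finset.coe_filter, Set.mem_setOf_eq] at ht
      exact Finset.mem_coe.mpr ht.1))]
    have h3 : (Finset.range (ℓ c)).filter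
          (fun t => g ((q : ZMod n) ^ t * c) ≠ f ((q : ZMod n) ^ t * c)) =
        (Finset.range (ℓ c)).filter
          (fun t => ¬ ((g ((q : ZMod n) ^ t * c)) ^ q ^ (m - t) = f c)) := by
      apply Finset.filter_congr
      intro t ht
      rw [Finset.mem_range] at ht
      have htm : t ≤ m := le_trans (le_of_lt ht) (hLle c)
      rw [hiter f hf t c]
      simp only [ne_eq]
      rw [hagree c t (f c) htm]
    rw [h3]
    have h4 := Finset.card_filter_add_card_filter_not
      (s := Finset.range (ℓ c))
      (p := fun t => (g ((q : ZMod n) ^ t * c)) ^ q ^ (m - t) = f c)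
    rw [Finset.card_range] at h4
    omega
  -- the sSup sets
  set A : ZMod n → L → ℕ := fun c b =>
    ((Finset.range (ℓ c)).filter
      (fun t => (g ((q : ZMod n) ^ t * c)) ^ q ^ (m - t) = b)).card with hA
  set S : ZMod n → Set ℕ := fun c =>
    {k : ℕ | ∃ b : L, b ^ q ^ (ℓ c) = b ∧ k = A c b} with hS
  have hSne : ∀ c, (S c).Nonempty := by
    intro c
    exact ⟨A c 0, 0, by rw [zero_pow (by positivity)], rfl⟩
  have hSbdd : ∀ c, BddAbove (S c) := by
    intro c
    refine ⟨ℓ c, ?_⟩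
    rintro k ⟨b, -, rfl⟩
    calc A c b ≤ (Finset.range (ℓ c)).card := Finset.card_filter_le _ _
      _ = ℓ c := Finset.card_range _
  -- membership in GF(q^ℓ) for code functions
  have hGF : ∀ f : ZMod n → L, (∀ i, f ((q : ZMod n) * i) = f i ^ q) →
      ∀ c : ZMod n, f c ^ q ^ (ℓ c) = f c := by
    intro f hf c
    have := hiter f hf (ℓ c) c
    rw [hstep c] at this
    exact this.symm
  -- choose optimal b for each class
  have hbex : ∀ c : ZMod n, ∃ b : L, b ^ q ^ (ℓ c) = b ∧ A c b = sSup (S c) := by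
    intro c
    obtain ⟨b, hb1, hb2⟩ := Nat.sSup_mem (hSne c) (hSbdd c)
    exact ⟨b, hb1, hb2.symm⟩
  choose b hb1 hb2 using hbex
  -- choose representative / exponent for each s
  choose C hmem T hT using fun s => (hR s).exists
  have huniq : ∀ (s y : ZMod n), (y ∈ R ∧ ∃ t, s = (q : ZMod n) ^ t * y) → y = C s :=
    fun s y h => (hR s).unique h ⟨hmem s, T s, hT s⟩
  -- exponent determined mod ℓ
  have hexp : ∀ (c : ZMod n) (t t' : ℕ),
      (q : ZMod n) ^ t * c = (q : ZMod n) ^ t' * c → t % ℓ c = t' % ℓ c := by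
    intro c t t' h
    apply hinjOn c (Finset.mem_coe.mpr (Finset.mem_range.mpr (Nat.mod_lt _ (hLpos c))))
      (Finset.mem_coe.mpr (Finset.mem_range.mpr (Nat.mod_lt _ (hLpos c))))
    show (q : ZMod n) ^ (t % ℓ c) * c = (q : ZMod n) ^ (t' % ℓ c) * c
    rw [← hmod, ← hmod, h]
  -- define the optimal code function
  set f₀ : ZMod n → L := fun s => b (C s) ^ q ^ (T s % ℓ (C s)) with hf₀
  have hCfix : ∀ c ∈ R, C c = c := by
    intro c hc
    exact (huniq c c ⟨hc, 0, by simp⟩).symm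
  have hf₀R : ∀ c ∈ R, f₀ c = b c := by
    intro c hc
    have hc0 : (q : ZMod n) ^ (T c) * c = (q : ZMod n) ^ 0 * c := by
      rw [pow_zero, one_mul]
      conv_rhs => rw [hT c, hCfix c hc]
    have h5 := hexp c (T c) 0 hc0
    rw [Nat.zero_mod] at h5
    show b (C c) ^ q ^ (T c % ℓ (C c)) = b c
    rw [hCfix c hc, h5, pow_zero, pow_one]
  have hf₀code : ∀ i, f₀ ((q : ZMod n) * i) = f₀ i ^ q := by
    intro s
    have hCq : C ((q : ZMod n) * s) = C s := by
      refine (huniq ((q : ZMod n) * s) (C s) ⟨hmem s, T s + 1, ?_⟩).symm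
      rw [pow_succ', mul_assoc, ← hT s]
    have hTq : T ((q : ZMod n) * s) % ℓ (C s) = (T s + 1) % ℓ (C s) := by
      apply hexp
      rw [← hCq]
      conv_lhs => rw [← hT ((q : ZMod n) * s)]
      rw [hCq, pow_succ', mul_assoc, ← hT s]
    show b (C ((q : ZMod n) * s)) ^ q ^ (T ((q : ZMod n) * s) % ℓ (C ((q : ZMod n) * s))) =
      (b (C s) ^ q ^ (T s % ℓ (C s))) ^ q
    rw [hCq, hTq]
    have hmodeq : (T s % ℓ (C s) + 1) % ℓ (C s) = (T s + 1) % ℓ (C s) :=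
      (Nat.mod_modEq (T s) (ℓ (C s))).add_right 1
    rw [← hmodeq, ← powPowMod q (ℓ (C s)) (b (C s)) (hb1 (C s)),
      pow_succ, pow_mul]
  -- conclusion
  apply le_antisymm
  · apply Nat.sInf_le
    refine ⟨f₀, hf₀code, ?_⟩
    rw [hcount f₀ hf₀code]
    apply Finset.sum_congr rfl
    intro c hc
    rw [hf₀R c hc, show ((Finset.range (ℓ c)).filter
      (fun t => (g ((q : ZMod n) ^ t * c)) ^ q ^ (m - t) = b c)).card = A c (b c) from rfl,
      hb2 c]
  · apply le_csInf
    · exact ⟨_, f₀, hf₀code, rfl⟩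
    · rintro k ⟨f, hf, rfl⟩
      rw [hcount f hf]
      apply Finset.sum_le_sum
      intro c hc
      apply Nat.sub_le_sub_left
      exact le_csSup (hSbdd c) ⟨f c, hGF f hf c, rfl⟩
end

section
/- Let ℓ divide m and consider the class code 𝒞_ℓ = {(b, b^q, …, b^{q^{ℓ−1}}) : b ∈ GF(q^ℓ)} ⊆ L^ℓ. Its covering radius in the symbol Hamming metric, ρ(𝒞_ℓ) = max_{y ∈ L^ℓ} min_{c ∈ 𝒞_ℓ} |{t : y_t ≠ c_t}|, equals ℓ if ℓ < m, and equals ℓ − 1 if ℓ = m. -/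
/-!
Since `x ↦ x^{q^t}` is injective on `L` for `t ≤ m`, a word `y_t = (f t)^{q^t}` agrees with the
codeword `(b^{q^t})_t` exactly where `f t = b`. For `ℓ < m` take `f` constant at some `a` with
`a^{q^ℓ} ≠ a` (it exists because `X^{q^ℓ} - X` has at most `q^ℓ < |L|` roots): that word
disagrees with every codeword everywhere. For `ℓ = m` every `b ∈ L` gives a codeword, so
`b = y_0` brings any word within `ℓ - 1`, while an injective `f` agrees with each codeword at
most once.
-/

open scoped Classical

open Finset Function

theorem Function.Injective.card_sub_one_le_card_filter_ne {ι α : Type*} [Fintype ι]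
    {f : ι → α} (hf : Injective f) (b : α) :
    Fintype.card ι - 1 ≤ #{i | f i ≠ b} := by
  have hsplit := card_filter_add_card_filter_not (s := univ) (p := fun i => f i = b)
  have hfiber : #{i | f i = b} ≤ 1 :=
    card_le_one.2 fun i hi j hj => hf ((mem_filter.1 hi).2.trans (mem_filter.1 hj).2.symm)
  rw [card_univ] at hsplit
  simp only [ne_eq]
  omega

namespace ClassCode

variable {L : Type*} {q m ℓ : ℕ}

section Monoid

variable [Monoid L]

noncomputable def codewordDist (q : ℕ) (y : Fin ℓ → L) (b : L) : ℕ :=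
  #{t | y t ≠ b ^ q ^ (t : ℕ)}

noncomputable def distToCode (q ℓ : ℕ) (y : Fin ℓ → L) : ℕ :=
  sInf {d | ∃ b : L, b ^ q ^ ℓ = b ∧ d = codewordDist q y b}

theorem distToCode_le_codewordDist (y : Fin ℓ → L) {b : L} (hb : b ^ q ^ ℓ = b) :
    distToCode q ℓ y ≤ codewordDist q y b :=
  Nat.sInf_le ⟨b, hb, rfl⟩

theorem le_distToCode {y : Fin ℓ → L} {d : ℕ}
    (h : ∀ b : L, b ^ q ^ ℓ = b → d ≤ codewordDist q y b) : d ≤ distToCode q ℓ y :=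
  le_csInf ⟨_, 1, one_pow _, rfl⟩ fun _ ⟨b, hb, hd⟩ => hd ▸ h b hb

theorem distToCode_le_length (y : Fin ℓ → L) : distToCode q ℓ y ≤ ℓ :=
  (distToCode_le_codewordDist y (one_pow _)).trans <|
    (card_filter_le _ _).trans_eq (card_fin ℓ)

end Monoid

variable [Field L] [Fintype L]

theorem distToCode_le_pred [NeZero ℓ] (hL : Fintype.card L = q ^ ℓ) (y : Fin ℓ → L) :
    distToCode q ℓ y ≤ ℓ - 1 := by
  have hy₀ : y 0 ^ q ^ ℓ = y 0 := hL ▸ FiniteField.pow_card (y 0)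
  have h₀ : (0 : Fin ℓ) ∉ ({t | y t ≠ y 0 ^ q ^ (t : ℕ)} : Finset (Fin ℓ)) := by simp
  exact (distToCode_le_codewordDist y hy₀).trans
    (Nat.le_pred_of_lt ((card_lt_univ_of_notMem h₀).trans_eq (Fintype.card_fin ℓ)))

theorem pow_pow_injective (hL : Fintype.card L = q ^ m) {t : ℕ} (ht : t ≤ m) :
    Injective fun x : L => x ^ q ^ t := by
  intro x y h
  have h' := congrArg (· ^ q ^ (m - t)) h
  simpa only [← pow_mul, ← pow_add, Nat.add_sub_cancel' ht, ← hL, FiniteField.pow_card] using h'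

theorem codewordDist_frobenius (hL : Fintype.card L = q ^ m) (hℓ : ℓ ≤ m) (f : Fin ℓ → L)
    (b : L) : codewordDist q (fun t => f t ^ q ^ (t : ℕ)) b = #{t | f t ≠ b} := by
  unfold codewordDist
  congr! 2 with t
  exact (pow_pow_injective hL (t.2.le.trans hℓ)).ne_iff

theorem exists_pow_ne_self {n : ℕ} (hn : 1 < n) (hlt : n < Fintype.card L) :
    ∃ a : L, a ^ n ≠ a := by
  by_contra! h
  refine hlt.not_ge ((Polynomial.card_le_degree_of_subset_roots fun x _ => ?_).trans_eq
    (FiniteField.X_pow_card_sub_X_natDegree_eq L hn))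
  simp [Polynomial.mem_roots (FiniteField.X_pow_card_sub_X_ne_zero L hn), h x]

theorem distToCode_frobenius_const (hL : Fintype.card L = q ^ m) (hℓ : ℓ ≤ m) {a : L}
    (ha : a ^ q ^ ℓ ≠ a) : distToCode q ℓ (fun t : Fin ℓ => a ^ q ^ (t : ℕ)) = ℓ := by
  refine le_antisymm (distToCode_le_length _) (le_distToCode fun b hb => ?_)
  have hab : a ≠ b := by rintro rfl; exact ha hb
  simp [codewordDist_frobenius hL hℓ (fun _ => a), hab]

theorem pred_le_distToCode_of_injective (hL : Fintype.card L = q ^ m) (hℓ : ℓ ≤ m)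
    {f : Fin ℓ → L} (hf : Injective f) :
    ℓ - 1 ≤ distToCode q ℓ (fun t => f t ^ q ^ (t : ℕ)) :=
  le_distToCode fun b _ => by
    simpa [codewordDist_frobenius hL hℓ] using hf.card_sub_one_le_card_filter_ne b

end ClassCode

open ClassCode

theorem stmt_14_general (q m ℓ : ℕ)
    (L : Type*) [Field L] [Fintype L] (hL : Fintype.card L = q ^ m) :
    (ℓ < m →
      Finset.univ.sup (fun y : Fin ℓ → L =>
        sInf {d : ℕ | ∃ b : L, b ^ q ^ ℓ = b ∧
          d = (Finset.univ.filter (fun t : Fin ℓ => y t ≠ b ^ q ^ (t : ℕ))).card}) = ℓ) ∧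
    (ℓ = m →
      Finset.univ.sup (fun y : Fin ℓ → L =>
        sInf {d : ℕ | ∃ b : L, b ^ q ^ ℓ = b ∧
          d = (Finset.univ.filter (fun t : Fin ℓ => y t ≠ b ^ q ^ (t : ℕ))).card}) = ℓ - 1) := by
  have hqm : 1 < q ^ m := hL ▸ Fintype.one_lt_card
  have hm : m ≠ 0 := by rintro rfl; simp at hqm
  have hq : 1 < q := (one_lt_pow_iff hm).1 hqm
  refine ⟨fun hlt => ?_, fun heq => ?_⟩
  · change univ.sup (distToCode q ℓ) = ℓ
    refine le_antisymm (Finset.sup_le fun y _ => distToCode_le_length y) ?_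
    rcases ℓ.eq_zero_or_pos with rfl | hℓ
    · exact Nat.zero_le _
    obtain ⟨a, ha⟩ := exists_pow_ne_self (Nat.one_lt_pow hℓ.ne' hq)
      (hL ▸ Nat.pow_lt_pow_right hq hlt)
    exact (distToCode_frobenius_const hL hlt.le ha).ge.trans (Finset.le_sup (mem_univ _))
  · subst heq
    change univ.sup (distToCode q ℓ) = ℓ - 1
    have : NeZero ℓ := ⟨hm⟩
    obtain ⟨f⟩ : Nonempty (Fin ℓ ↪ L) :=
      Embedding.nonempty_of_card_le (by simpa [hL] using (Nat.lt_pow_self hq).le)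
    exact le_antisymm (Finset.sup_le fun y _ => distToCode_le_pred hL y)
      ((pred_le_distToCode_of_injective hL le_rfl f.injective).trans (Finset.le_sup (mem_univ _)))

/-- the covering radius of the class code
`𝒞_ℓ = {(b, b^q, …, b^{q^{ℓ-1}}) : b ∈ GF(q^ℓ)} ⊆ L^ℓ` in the symbol Hamming metric
equals `ℓ` when `ℓ < m` and `ℓ - 1` when `ℓ = m`. -/
theorem stmt_14 (q m ℓ : ℕ) (hq : IsPrimePow q) (hm : 0 < m) (hℓ : ℓ ∣ m)
    (L : Type*) [Field L] [Fintype L] (hL : Fintype.card L = q ^ m) :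
    (ℓ < m →
      Finset.univ.sup (fun y : Fin ℓ → L =>
        sInf {d : ℕ | ∃ b : L, b ^ q ^ ℓ = b ∧
          d = (Finset.univ.filter (fun t : Fin ℓ => y t ≠ b ^ q ^ (t : ℕ))).card}) = ℓ) ∧
    (ℓ = m →
      Finset.univ.sup (fun y : Fin ℓ → L =>
        sInf {d : ℕ | ∃ b : L, b ^ q ^ ℓ = b ∧
          d = (Finset.univ.filter (fun t : Fin ℓ => y t ≠ b ^ q ^ (t : ℕ))).card}) = ℓ - 1) :=
  stmt_14_general q m ℓ L hL
end

section
/- Let B_m(n) denote the number of q-cyclotomic classes modulo n having length exactly m. Then the covering radius of F_n ⊆ L^n in the symbol Hamming metric equals n − B_m(n). Moreover, for n = q^m − 1 one has B_m(n) = (1/m)·∑_{r ∣ m} μ(m/r)·(q^r − 1). -/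
/-!
Multiplication by `q` permutes `ℤ/nℤ` (as `q ^ m = 1`), the Frobenius `x ↦ x ^ q` satisfies
`x ^ (q ^ m) = x` on `L`, and `F_n` is the set of maps intertwining the two. On an orbit of length
`m` an element of `F_n` may take any value at one chosen point, so every `g` is matched at one point
of each such orbit: the covering radius is at most `n - B_m(n)`. Conversely let `g` be constant,
equal to a generator `γ` of `Lˣ`, whose Frobenius orbit has length exactly `m`. If `f i = γ` with
`f ∈ F_n`, then `m` divides the length of the orbit of `i`, which is therefore `m`, and
`f (q ^ t * i) = γ ^ (q ^ t) ≠ γ` for `0 < t < m`; so `f` agrees with `g` at most once per orbit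
of length `m`.

For `n = q ^ m - 1` the points fixed by multiplication by `q ^ r`, `r ∣ m`, form the kernel of
multiplication by `q ^ r - 1`, of size `q ^ r - 1`. Sorting them by their period gives
`∑_{d ∣ r} #{i of period d} = q ^ r - 1`, and Möbius inversion yields `m * B_m(n)`.
-/

open scoped Classical

/-- The `q`-cyclotomic class of `s` modulo `n`, as a finset. -/
noncomputable def cycClass (q n : ℕ) [NeZero n] (s : ZMod n) : Finset (ZMod n) :=
  Finset.univ.filter (fun x => ∃ t : ℕ, x = (q : ZMod n) ^ t * s)

/-- The set of all `q`-cyclotomic classes modulo `n`. -/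
noncomputable def cycClasses (q n : ℕ) [NeZero n] : Finset (Finset (ZMod n)) :=
  Finset.univ.image (cycClass q n)

open Finset Function

section Periodic

variable {X Y : Type*} {σ : X → X} {φ : Y → Y} {x : X}

lemma iterate_eq_iterate_of_iterate_eq {v : Y} (hx : x ∈ periodicPts σ)
    (hv : IsPeriodicPt φ (minimalPeriod σ x) v) {a b : ℕ} (h : σ^[a] x = σ^[b] x) :
    φ^[a] v = φ^[b] v := by
  rw [← hv.iterate_mod_apply a, ← hv.iterate_mod_apply b]
  have hp := minimalPeriod_pos_of_mem_periodicPts hx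
  congr 1
  refine iterate_injOn_Iio_minimalPeriod (Set.mem_Iio.2 (Nat.mod_lt a hp))
    (Set.mem_Iio.2 (Nat.mod_lt b hp)) ?_
  simpa only [iterate_mod_minimalPeriod_eq] using h

lemma mem_periodicPts_of_iterate_eq_id {m : ℕ} (hm : 0 < m) (hσ : σ^[m] = id) (x : X) :
    x ∈ periodicPts σ :=
  mk_mem_periodicPts hm (congrFun hσ x)

lemma Function.Semiconj.minimalPeriod_dvd {f : X → Y} (hf : Semiconj f σ φ) (x : X) :
    minimalPeriod φ (f x) ∣ minimalPeriod σ x :=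
  ((isPeriodicPt_minimalPeriod σ x).map hf).minimalPeriod_dvd

end Periodic

section Orbits

variable {X : Type*} [Fintype X] {σ : X → X} {x y : X}

noncomputable def orbitFinset (σ : X → X) (x : X) : Finset X := {y | ∃ t, σ^[t] x = y}

@[simp]
lemma mem_orbitFinset : y ∈ orbitFinset σ x ↔ ∃ t, σ^[t] x = y := by
  simp [orbitFinset]

lemma mem_orbitFinset_self (x : X) : x ∈ orbitFinset σ x := mem_orbitFinset.2 ⟨0, rfl⟩

lemma orbitFinset_eq_image (hx : x ∈ periodicPts σ) :
    orbitFinset σ x = (range (minimalPeriod σ x)).image (σ^[·] x) := by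
  ext y
  simp only [mem_orbitFinset, mem_image, mem_range]
  constructor
  · rintro ⟨t, rfl⟩
    exact ⟨t % minimalPeriod σ x, Nat.mod_lt _ (minimalPeriod_pos_of_mem_periodicPts hx),
      iterate_mod_minimalPeriod_eq⟩
  · rintro ⟨t, -, rfl⟩
    exact ⟨t, rfl⟩

lemma card_orbitFinset (hx : x ∈ periodicPts σ) : #(orbitFinset σ x) = minimalPeriod σ x := by
  rw [orbitFinset_eq_image hx, card_image_of_injOn, card_range]
  exact fun a ha b hb ↦ iterate_injOn_Iio_minimalPeriod (by simpa using ha) (by simpa using hb)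

lemma orbitFinset_eq_of_mem (hx : x ∈ periodicPts σ) (hy : y ∈ orbitFinset σ x) :
    orbitFinset σ y = orbitFinset σ x := by
  obtain ⟨t, rfl⟩ := mem_orbitFinset.1 hy
  obtain ⟨p, hp, hpx⟩ := hx
  ext z
  simp only [mem_orbitFinset, ← iterate_add_apply]
  constructor
  · rintro ⟨u, rfl⟩
    exact ⟨u + t, rfl⟩
  · rintro ⟨u, rfl⟩
    obtain ⟨k, rfl⟩ : ∃ k, p = k + 1 := ⟨p - 1, by omega⟩
    refine ⟨u + k * t, ?_⟩
    rw [show u + k * t + t = u + (k + 1) * t by ring, iterate_add_apply, hpx.mul_const t]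

lemma orbitFinset_apply (hx : x ∈ periodicPts σ) : orbitFinset σ (σ x) = orbitFinset σ x :=
  orbitFinset_eq_of_mem hx (mem_orbitFinset.2 ⟨1, rfl⟩)

end Orbits

section Equivariant

variable {X Y : Type*} [Fintype X] {σ : X → X} {φ : Y → Y}

theorem exists_semiconj_eqOn (hσ : ∀ x, x ∈ periodicPts σ) {y₀ : Y}
    (hy₀ : IsFixedPt φ y₀) {R : Finset X} (hR : Set.InjOn (orbitFinset σ) R) (g : X → Y)
    (hg : ∀ r ∈ R, IsPeriodicPt φ (minimalPeriod σ r) (g r)) :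
    ∃ f, Semiconj f σ φ ∧ ∀ r ∈ R, f r = g r := by
  have hrep : ∀ x, ∃ r t,
      (∃ r ∈ R, orbitFinset σ x = orbitFinset σ r) → r ∈ R ∧ σ^[t] r = x := by
    intro x
    by_cases h : ∃ r ∈ R, orbitFinset σ x = orbitFinset σ r
    · obtain ⟨r, hr, hxr⟩ := h
      obtain ⟨t, ht⟩ := mem_orbitFinset.1 (hxr ▸ mem_orbitFinset_self x)
      exact ⟨r, t, fun _ ↦ ⟨hr, ht⟩⟩
    · exact ⟨x, 0, fun h' ↦ absurd h' h⟩
  choose rep idx hrep using hrep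
  have rep_eq : ∀ x, ∀ r ∈ R, orbitFinset σ x = orbitFinset σ r → rep x = r := by
    intro x r hr hxr
    obtain ⟨hrepR, hx⟩ := hrep x ⟨r, hr, hxr⟩
    exact hR hrepR hr
      ((orbitFinset_eq_of_mem (hσ _) (mem_orbitFinset.2 ⟨_, hx⟩)).symm.trans hxr)
  -- on the orbit of `r ∈ R`, `f (σ^[t] r) = φ^[t] (g r)`; elsewhere `f = y₀`
  refine ⟨fun x ↦
    if ∃ r ∈ R, orbitFinset σ x = orbitFinset σ r then φ^[idx x] (g (rep x)) else y₀,
    fun x ↦ ?_, fun r hr ↦ ?_⟩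
  · simp only [orbitFinset_apply (hσ x)]
    split_ifs with h
    · obtain ⟨r, hr, hxr⟩ := h
      have hx := rep_eq x r hr hxr
      have hσx := rep_eq (σ x) r hr ((orbitFinset_apply (hσ x)).trans hxr)
      have e := (hrep x ⟨r, hr, hxr⟩).2
      have eσ := (hrep (σ x) ⟨r, hr, (orbitFinset_apply (hσ x)).trans hxr⟩).2
      rw [hx] at e
      rw [hσx] at eσ
      rw [hx, hσx, ← iterate_succ_apply' φ]
      refine iterate_eq_iterate_of_iterate_eq (hσ r) (hg r hr) ?_
      rw [eσ, iterate_succ_apply', e]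
    · exact hy₀.symm
  · dsimp only
    rw [if_pos ⟨r, hr, rfl⟩, rep_eq r r hr rfl]
    refine iterate_eq_iterate_of_iterate_eq (b := 0) (hσ r) (hg r hr) ?_
    have := (hrep r ⟨r, hr, rfl⟩).2
    rwa [rep_eq r r hr rfl] at this

end Equivariant

section OrbitsOfCard

variable {X Y : Type*} [Fintype X] [DecidableEq X] {σ : X → X} {φ : Y → Y} {m : ℕ}

noncomputable def orbitsOfCard (σ : X → X) (m : ℕ) : Finset (Finset X) :=
  {C ∈ univ.image (orbitFinset σ) | #C = m}

lemma orbitFinset_mem_orbitsOfCard (hm : 0 < m) (hσ : σ^[m] = id) {x : X}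
    (hx : minimalPeriod σ x = m) : orbitFinset σ x ∈ orbitsOfCard σ m := by
  simp only [orbitsOfCard, mem_filter, mem_image, mem_univ, true_and, exists_apply_eq_apply,
    card_orbitFinset (mem_periodicPts_of_iterate_eq_id hm hσ x), hx]

theorem exists_semiconj_card_ne_le (hm : 0 < m) (hσ : σ^[m] = id) (hφ : φ^[m] = id) {y₀ : Y}
    (hy₀ : IsFixedPt φ y₀) (g : X → Y) :
    ∃ f, Semiconj f σ φ ∧ #{x | g x ≠ f x} ≤ Fintype.card X - #(orbitsOfCard σ m) := by
  have hper := mem_periodicPts_of_iterate_eq_id hm hσ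
  obtain ⟨R, hRm, hRinj, hRimage⟩ := exists_subset_injOn_image_eq_of_surjOn
    {x | minimalPeriod σ x = m} (orbitsOfCard σ m) fun C hC ↦ by
      simp only [orbitsOfCard, coe_filter, mem_image, mem_univ, true_and] at hC
      obtain ⟨⟨x, rfl⟩, hx⟩ := hC
      exact ⟨x, (card_orbitFinset (hper x)).symm.trans hx, rfl⟩
  obtain ⟨f, hf, hfR⟩ := exists_semiconj_eqOn hper hy₀ hRinj g fun r hr ↦ by
    rw [show minimalPeriod σ r = m from hRm hr]
    exact congrFun hφ (g r)
  refine ⟨f, hf, ?_⟩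
  calc #{x | g x ≠ f x} ≤ #(univ \ R) :=
        card_le_card fun x hx ↦
          mem_sdiff.2 ⟨mem_univ x, fun hxR ↦ (mem_filter.1 hx).2 (hfR x hxR).symm⟩
    _ = Fintype.card X - #(orbitsOfCard σ m) := by
        rw [card_univ_sdiff, ← hRimage, card_image_of_injOn hRinj]

theorem card_fiber_le_card_orbitsOfCard (hm : 0 < m) (hσ : σ^[m] = id) {f : X → Y}
    (hf : Semiconj f σ φ) {γ : Y} (hγ : minimalPeriod φ γ = m) :
    #{x | f x = γ} ≤ #(orbitsOfCard σ m) := by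
  refine card_le_card_of_injOn (orbitFinset σ) (fun x hx ↦ ?_) fun x hx y hy hxy ↦ ?_
  · have hfx : f x = γ := (mem_filter.1 hx).2
    refine orbitFinset_mem_orbitsOfCard hm hσ (Nat.dvd_antisymm ?_ ?_)
    · exact isPeriodicPt_iff_minimalPeriod_dvd.1 (congrFun hσ x)
    · exact hγ ▸ hfx ▸ hf.minimalPeriod_dvd x
  · obtain ⟨t, rfl⟩ := mem_orbitFinset.1 (hxy ▸ mem_orbitFinset_self y)
    have hγt : IsPeriodicPt φ t γ := by
      rw [IsPeriodicPt, IsFixedPt, ← (mem_filter.1 hx).2, ← hf.iterate_right t x]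
      exact (mem_filter.1 hy).2.trans (mem_filter.1 hx).2.symm
    have hmt : m ∣ t := hγ ▸ hγt.minimalPeriod_dvd
    exact ((show IsPeriodicPt σ m x from congrFun hσ x).trans_dvd hmt).symm

end OrbitsOfCard

lemma sup_sInf_eq_of_exists_le_of_exists_forall_le {G β : Type*} [Fintype G] {P : β → Prop}
    {d : G → β → ℕ} {N : ℕ} (hup : ∀ g, ∃ f, P f ∧ d g f ≤ N)
    (hlow : ∃ g, ∀ f, P f → N ≤ d g f) :
    univ.sup (fun g ↦ sInf {k | ∃ f, P f ∧ k = d g f}) = N := by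
  refine le_antisymm (Finset.sup_le fun g _ ↦ ?_) ?_
  · obtain ⟨f, hf, hle⟩ := hup g
    exact (Nat.sInf_le (s := {k | ∃ f, P f ∧ k = d g f}) ⟨f, hf, rfl⟩).trans hle
  · obtain ⟨g, hg⟩ := hlow
    obtain ⟨f, hf, -⟩ := hup g
    refine le_trans ?_ (le_sup (mem_univ g))
    refine le_csInf ⟨d g f, f, hf, rfl⟩ ?_
    rintro k ⟨f, hf, rfl⟩
    exact hg f hf

section CoveringRadius

variable {X Y : Type*} [Fintype X] [DecidableEq X] [Fintype Y] {σ : X → X} {φ : Y → Y}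
  {m : ℕ}

theorem sup_sInf_card_ne_semiconj_eq (hm : 0 < m) (hσ : σ^[m] = id) (hφ : φ^[m] = id)
    {y₀ γ : Y} (hy₀ : IsFixedPt φ y₀) (hγ : minimalPeriod φ γ = m) :
    univ.sup (fun g : X → Y ↦ sInf {k | ∃ f, Semiconj f σ φ ∧ k = #{x | g x ≠ f x}}) =
      Fintype.card X - #(orbitsOfCard σ m) := by
  refine sup_sInf_eq_of_exists_le_of_exists_forall_le
    (exists_semiconj_card_ne_le hm hσ hφ hy₀) ⟨fun _ ↦ γ, fun f hf ↦ ?_⟩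
  have hsplit := card_filter_add_card_filter_not (s := univ) fun x ↦ f x ≠ γ
  simp only [not_not, card_univ] at hsplit
  have := card_fiber_le_card_orbitsOfCard hm hσ hf hγ
  simp only [ne_comm (a := γ)]
  omega

end CoveringRadius

section Counting

open ArithmeticFunction
open scoped ArithmeticFunction.Moebius

variable {X : Type*} [Fintype X] [DecidableEq X] {σ : X → X} {m : ℕ}

lemma card_isPeriodicPt_eq_sum {r : ℕ} (hr : 0 < r) :
    #{x | IsPeriodicPt σ r x} = ∑ d ∈ r.divisors, #{x | minimalPeriod σ x = d} := by
  rw [card_eq_sum_card_fiberwise (f := minimalPeriod σ) (t := r.divisors) fun x hx ↦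
    Nat.mem_divisors.2 ⟨isPeriodicPt_iff_minimalPeriod_dvd.1 (mem_filter.1 hx).2, hr.ne'⟩]
  refine sum_congr rfl fun d hd ↦ ?_
  rw [filter_filter]
  congr 1
  ext x
  simp only [mem_filter, mem_univ, true_and, and_iff_right_iff_imp]
  rintro rfl
  exact isPeriodicPt_iff_minimalPeriod_dvd.2 (Nat.dvd_of_mem_divisors hd)

lemma card_minimalPeriod_eq_eq_mul (hm : 0 < m) (hσ : σ^[m] = id) :
    #{x | minimalPeriod σ x = m} = m * #(orbitsOfCard σ m) := by
  have hper := mem_periodicPts_of_iterate_eq_id hm hσ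
  rw [card_eq_sum_card_fiberwise (f := orbitFinset σ) (t := orbitsOfCard σ m) fun x hx ↦
    orbitFinset_mem_orbitsOfCard hm hσ (mem_filter.1 hx).2, mul_comm, ← smul_eq_mul,
    ← sum_const]
  refine sum_congr rfl fun C hC ↦ ?_
  simp only [orbitsOfCard, mem_filter, mem_image, mem_univ, true_and] at hC
  obtain ⟨⟨x₀, rfl⟩, hC⟩ := hC
  rw [← hC, filter_filter]
  congr 1
  ext x
  simp only [mem_filter, mem_univ, true_and]
  constructor
  · rintro ⟨-, hx⟩
    exact hx ▸ mem_orbitFinset_self x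
  · intro hx
    have hxx₀ := orbitFinset_eq_of_mem (hper x₀) hx
    exact ⟨by rw [← card_orbitFinset (hper x), hxx₀, hC], hxx₀⟩

theorem natCast_mul_card_orbitsOfCard_eq_sum_moebius (hm : 0 < m) (hσ : σ^[m] = id) :
    (m * #(orbitsOfCard σ m) : ℤ) =
      ∑ r ∈ m.divisors, μ (m / r) * (#{x | IsPeriodicPt σ r x} : ℤ) := by
  have hinv := sum_eq_iff_sum_mul_moebius_eq
    (f := fun d ↦ (#{x | minimalPeriod σ x = d} : ℤ))
    (g := fun r ↦ (#{x | IsPeriodicPt σ r x} : ℤ))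
    |>.1 (fun r hr ↦ mod_cast (card_isPeriodicPt_eq_sum hr).symm) m hm
  simp only [Int.cast_id] at hinv
  rw [Nat.sum_divisorsAntidiagonal' (f := fun a b ↦
    (μ a : ℤ) * (#{x | IsPeriodicPt σ b x} : ℤ))] at hinv
  rw [hinv, card_minimalPeriod_eq_eq_mul hm hσ, Nat.cast_mul]

end Counting

section CyclotomicClasses

lemma cycClass_eq_orbitFinset (q n : ℕ) [NeZero n] :
    cycClass q n = orbitFinset ((q : ZMod n) * ·) := by
  ext s x
  simp [cycClass, mul_left_iterate, eq_comm]

lemma filter_cycClasses_card_eq_orbitsOfCard (q m n : ℕ) [NeZero n] :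
    (cycClasses q n).filter (fun C ↦ C.card = m) = orbitsOfCard ((q : ZMod n) * ·) m := by
  rw [cycClasses, cycClass_eq_orbitFinset, orbitsOfCard]

lemma mul_left_iterate_eq_id {M : Type*} [Monoid M] {a : M} {m : ℕ} (ha : a ^ m = 1) :
    (a * ·)^[m] = id := by
  rw [mul_left_iterate, ha]
  exact funext one_mul

lemma ZMod.card_filter_natCast_mul_eq_zero {a n : ℕ} [NeZero n] (ha : a ∣ n) :
    #{s : ZMod n | (a : ZMod n) * s = 0} = a := by
  have := IsAddCyclic.card_nsmulAddMonoidHom_ker (ZMod n) a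
  rw [Nat.card_zmod, Nat.gcd_eq_right ha, Nat.card_eq_fintype_card, Fintype.card_subtype] at this
  simpa [nsmul_eq_mul] using this

lemma card_isPeriodicPt_natCast_mul {q r n : ℕ} [NeZero n] (hq : 0 < q) (hdvd : q ^ r - 1 ∣ n) :
    #{s : ZMod n | IsPeriodicPt ((q : ZMod n) * ·) r s} = q ^ r - 1 := by
  rw [← ZMod.card_filter_natCast_mul_eq_zero hdvd]
  congr 1
  ext s
  simp [IsPeriodicPt, IsFixedPt, mul_left_iterate, Nat.cast_sub (Nat.one_le_pow r q hq), sub_mul,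
    sub_eq_zero]

end CyclotomicClasses

section FiniteField

variable {L : Type*} [Field L] [Fintype L] {q m : ℕ}

lemma one_lt_and_pos_of_card_eq_pow (hL : Fintype.card L = q ^ m) : 1 < q ∧ 0 < m := by
  have h := hL ▸ Fintype.one_lt_card (α := L)
  refine ⟨?_, Nat.pos_of_ne_zero fun hm ↦ by simp [hm] at h⟩
  by_contra! hq
  exact h.not_ge (pow_le_one₀ (Nat.zero_le q) hq)

lemma pow_iterate_eq_id (hL : Fintype.card L = q ^ m) : (fun x : L ↦ x ^ q)^[m] = id := by
  rw [pow_iterate, ← hL]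
  exact funext FiniteField.pow_card

lemma exists_minimalPeriod_pow_eq (hL : Fintype.card L = q ^ m) :
    ∃ γ : L, minimalPeriod (· ^ q) γ = m := by
  obtain ⟨hq, hm⟩ := one_lt_and_pos_of_card_eq_pow hL
  obtain ⟨γ, hγ⟩ := IsCyclic.exists_generator (α := Lˣ)
  have horder : orderOf γ = q ^ m - 1 := by
    rw [orderOf_eq_card_of_forall_mem_zpowers hγ, Nat.card_eq_fintype_card, Fintype.card_units, hL]
  refine ⟨γ, le_antisymm ?_ ?_⟩
  · exact IsPeriodicPt.minimalPeriod_le hm (congrFun (pow_iterate_eq_id hL) _)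
  set p := minimalPeriod (· ^ q) (γ : L)
  have hp : 0 < p := minimalPeriod_pos_of_mem_periodicPts
    (mk_mem_periodicPts hm (congrFun (pow_iterate_eq_id hL) _))
  have hγp : γ ^ q ^ p = γ ^ 1 := by
    have := iterate_minimalPeriod (f := (· ^ q)) (x := (γ : L))
    rw [pow_iterate] at this
    exact Units.ext (by simpa using this)
  -- `γ` generates `Lˣ`, so `q ^ m - 1 ∣ q ^ p - 1`
  have hdvd : q ^ m - 1 ∣ q ^ p - 1 :=
    horder ▸ (Nat.modEq_iff_dvd' (Nat.one_le_pow _ _ (by omega))).1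
      (pow_eq_pow_iff_modEq.1 hγp).symm
  have hle := Nat.le_of_dvd (Nat.sub_pos_of_lt (Nat.one_lt_pow hp.ne' hq)) hdvd
  exact (Nat.pow_le_pow_iff_right hq).1
    ((Nat.sub_le_sub_iff_right (Nat.one_le_pow _ _ (by omega))).1 hle)

end FiniteField

theorem stmt_15_general (q m n : ℕ)
    (L : Type*) [Field L] [Fintype L] (hL : Fintype.card L = q ^ m)
    [NeZero n] (hn : n ∣ q ^ m - 1) :
    (Finset.univ.sup (fun g : ZMod n → L =>
        sInf {k : ℕ | ∃ f : ZMod n → L,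
          (∀ i, f ((q : ZMod n) * i) = f i ^ q) ∧
          k = (Finset.univ.filter (fun i : ZMod n => g i ≠ f i)).card}) =
      n - ((cycClasses q n).filter (fun C => C.card = m)).card) ∧
    (n = q ^ m - 1 →
      ((((cycClasses q n).filter (fun C => C.card = m)).card : ℚ) =
        (1 / (m : ℚ)) * ∑ r ∈ m.divisors,
          (ArithmeticFunction.moebius (m / r) : ℚ) * ((q : ℚ) ^ r - 1))) := by
  obtain ⟨hq, hm⟩ := one_lt_and_pos_of_card_eq_pow hL
  have hqn : (q : ZMod n) ^ m = 1 := by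
    have h := (ZMod.natCast_eq_zero_iff _ n).2 hn
    rwa [Nat.cast_sub (Nat.one_le_pow _ _ (by omega)), Nat.cast_pow, Nat.cast_one,
      sub_eq_zero] at h
  have hσ := mul_left_iterate_eq_id hqn
  obtain ⟨γ, hγ⟩ := exists_minimalPeriod_pow_eq hL
  rw [filter_cycClasses_card_eq_orbitsOfCard]
  refine ⟨?_, fun hn' ↦ ?_⟩
  · have h := sup_sInf_card_ne_semiconj_eq (Y := L) hm hσ (pow_iterate_eq_id hL)
      (zero_pow (n := q) (by omega) : (0 : L) ^ q = 0) hγ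
    rwa [ZMod.card] at h
  · have h := natCast_mul_card_orbitsOfCard_eq_sum_moebius hm hσ
    rw [sum_congr rfl fun r hr ↦ by
      rw [card_isPeriodicPt_natCast_mul (by omega)
        (hn' ▸ Nat.pow_sub_one_dvd_pow_sub_one q (Nat.dvd_of_mem_divisors hr))]] at h
    have hcast : ∀ r, ((q ^ r - 1 : ℕ) : ℤ) = (q : ℤ) ^ r - 1 := fun r ↦ by
      rw [Nat.cast_sub (Nat.one_le_pow _ _ (by omega)), Nat.cast_pow, Nat.cast_one]
    simp only [hcast] at h
    field_simp
    rw [mul_comm]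
    exact_mod_cast h

/-- the symbol covering radius of `F_n ⊆ L^n` equals `n - B_m(n)`, where
`B_m(n)` is the number of `q`-cyclotomic classes modulo `n` of length exactly `m`;
and for `n = q^m - 1`, `B_m(n) = (1/m) ∑_{r ∣ m} μ(m/r) (q^r - 1)`. -/
theorem stmt_15 (q m n : ℕ) (hq : IsPrimePow q) (hm : 0 < m)
    (L : Type*) [Field L] [Fintype L] (hL : Fintype.card L = q ^ m)
    [NeZero n] (hn : n ∣ q ^ m - 1) :
    (Finset.univ.sup (fun g : ZMod n → L =>
        sInf {k : ℕ | ∃ f : ZMod n → L,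
          (∀ i, f ((q : ZMod n) * i) = f i ^ q) ∧
          k = (Finset.univ.filter (fun i : ZMod n => g i ≠ f i)).card}) =
      n - ((cycClasses q n).filter (fun C => C.card = m)).card) ∧
    (n = q ^ m - 1 →
      ((((cycClasses q n).filter (fun C => C.card = m)).card : ℚ) =
        (1 / (m : ℚ)) * ∑ r ∈ m.divisors,
          (ArithmeticFunction.moebius (m / r) : ℚ) * ((q : ℚ) ^ r - 1))) :=
  stmt_15_general q m n L hL hn
end

section
/- Let F be a field and T ≥ 1. Suppose λ_1, …, λ_T ∈ F are pairwise distinct, a_1, …, a_T ∈ F are all nonzero, λ'_1, …, λ'_T ∈ F are pairwise distinct, and a'_1, …, a'_T ∈ F are all nonzero. If ∑_{ν=1}^T a_ν λ_ν^i = ∑_{ν=1}^T a'_ν (λ'_ν)^i for all i = 0, 1, …, 2T − 1, then the unordered sets of pairs coincide: {(a_ν, λ_ν) : 1 ≤ ν ≤ T} = {(a'_ν, λ'_ν) : 1 ≤ ν ≤ T}. In particular, a T-sparse exponential-sum representation with distinct nonzero frequencies is uniquely determined by its first 2T values. -/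
open Finset

/-- Vanishing of the first `N ≥ s.card` moments of a function supported on `s` forces it to
vanish on `s`. -/
lemma moments_zero {F : Type*} [Field F] (s : Finset F) (c : F → F) (N : ℕ)
    (hcard : s.card ≤ N)
    (h : ∀ i : ℕ, i < N → ∑ x ∈ s, c x * x ^ i = 0) :
    ∀ x ∈ s, c x = 0 := by
  classical
  set n := s.card with hn
  set e : Fin n ≃ {x // x ∈ s} := s.equivFin.symm with he
  set v : Fin n → F := fun j => (e j : F) with hv
  have hvinj : Function.Injective v := by
    intro i j hij
    exact e.injective (Subtype.ext hij)
  have key : (fun j => c (v j)) = 0 := by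
    apply Matrix.eq_zero_of_forall_pow_sum_mul_pow_eq_zero hvinj
    intro i
    have := h i (lt_of_lt_of_le i.isLt hcard)
    rw [← this]
    rw [← Finset.sum_coe_sort s (fun x => c x * x ^ (i : ℕ))]
    exact (Equiv.sum_comp e (fun x => c (x : F) * (x : F) ^ (i : ℕ)))
  intro x hx
  have := congrFun key (e.symm ⟨x, hx⟩)
  simpa [v] using this

/-- One direction of the uniqueness. -/
lemma stmt_18_subset (F : Type*) [Field F] (T : ℕ)
    (a lam a' lam' : Fin T → F)
    (hlam : Function.Injective lam) (hlam' : Function.Injective lam')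
    (ha : ∀ ν, a ν ≠ 0)
    (h : ∀ i : ℕ, i < 2 * T →
      ∑ ν : Fin T, a ν * lam ν ^ i = ∑ ν : Fin T, a' ν * lam' ν ^ i) :
    Set.range (fun ν => (a ν, lam ν)) ⊆ Set.range (fun ν => (a' ν, lam' ν)) := by
  classical
  set s : Finset F := Finset.image lam Finset.univ ∪ Finset.image lam' Finset.univ with hs
  set c : F → F := fun x =>
    (∑ ν ∈ Finset.univ.filter (fun ν => lam ν = x), a ν)
      - (∑ ν ∈ Finset.univ.filter (fun ν => lam' ν = x), a' ν) with hc
  have hmaps : ∀ ν : Fin T, lam ν ∈ s := fun ν => by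
    simp [hs]
  have hmaps' : ∀ ν : Fin T, lam' ν ∈ s := fun ν => by
    simp [hs]
  have hfib : ∀ i : ℕ,
      ∑ x ∈ s, (∑ ν ∈ Finset.univ.filter (fun ν => lam ν = x), a ν) * x ^ i
        = ∑ ν : Fin T, a ν * lam ν ^ i := by
    intro i
    rw [← Finset.sum_fiberwise_of_maps_to (fun ν _ => hmaps ν)
      (fun ν => a ν * lam ν ^ i)]
    refine Finset.sum_congr rfl fun x _ => ?_
    rw [Finset.sum_mul]
    refine Finset.sum_congr rfl fun ν hν => ?_
    rw [Finset.mem_filter] at hν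
    rw [hν.2]
  have hfib' : ∀ i : ℕ,
      ∑ x ∈ s, (∑ ν ∈ Finset.univ.filter (fun ν => lam' ν = x), a' ν) * x ^ i
        = ∑ ν : Fin T, a' ν * lam' ν ^ i := by
    intro i
    rw [← Finset.sum_fiberwise_of_maps_to (fun ν _ => hmaps' ν)
      (fun ν => a' ν * lam' ν ^ i)]
    refine Finset.sum_congr rfl fun x _ => ?_
    rw [Finset.sum_mul]
    refine Finset.sum_congr rfl fun ν hν => ?_
    rw [Finset.mem_filter] at hν
    rw [hν.2]
  have hcard : s.card ≤ 2 * T := by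
    calc s.card ≤ (Finset.image lam Finset.univ).card
          + (Finset.image lam' Finset.univ).card := Finset.card_union_le _ _
      _ ≤ T + T := by
          have h1 : (Finset.image lam Finset.univ).card ≤ T :=
            (Finset.card_image_le).trans (by simp)
          have h2 : (Finset.image lam' Finset.univ).card ≤ T :=
            (Finset.card_image_le).trans (by simp)
          omega
      _ = 2 * T := by ring
  have hzero : ∀ x ∈ s, c x = 0 := by
    apply moments_zero s c (2 * T) hcard
    intro i hi
    have : ∑ x ∈ s, c x * x ^ i
        = (∑ ν : Fin T, a ν * lam ν ^ i) - (∑ ν : Fin T, a' ν * lam' ν ^ i) := by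
      simp only [hc, sub_mul, Finset.sum_sub_distrib, hfib i, hfib' i]
    rw [this, h i hi, sub_self]
  rintro p ⟨ν, rfl⟩
  have hcν := hzero (lam ν) (hmaps ν)
  have hfilt : Finset.univ.filter (fun μ => lam μ = lam ν) = {ν} := by
    ext μ
    simp [hlam.eq_iff]
  rw [hc] at hcν
  simp only [hfilt, Finset.sum_singleton, sub_eq_zero] at hcν
  -- hcν : a ν = ∑ μ ∈ filter (lam' μ = lam ν), a' μ
  have hne : (Finset.univ.filter (fun μ => lam' μ = lam ν)).Nonempty := by
    by_contra hcon
    rw [Finset.not_nonempty_iff_eq_empty] at hcon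
    rw [hcon, Finset.sum_empty] at hcν
    exact ha ν hcν
  obtain ⟨μ, hμ⟩ := hne
  rw [Finset.mem_filter] at hμ
  have hfilt' : Finset.univ.filter (fun μ' => lam' μ' = lam ν) = {μ} := by
    ext μ'
    simp only [Finset.mem_filter, Finset.mem_univ, true_and, Finset.mem_singleton]
    constructor
    · intro hx; exact hlam' (hx.trans hμ.2.symm)
    · rintro rfl; exact hμ.2
  rw [hfilt', Finset.sum_singleton] at hcν
  exact ⟨μ, by simp [hμ.2, ← hcν]⟩

/-- a `T`-sparse exponential sum with pairwise distinct frequencies and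
nonzero coefficients is uniquely determined (as an unordered set of coefficient–frequency
pairs) by its first `2T` values. -/
theorem stmt_18 (F : Type*) [Field F] (T : ℕ) (hT : 1 ≤ T)
    (a lam a' lam' : Fin T → F)
    (hlam : Function.Injective lam) (hlam' : Function.Injective lam')
    (ha : ∀ ν, a ν ≠ 0) (ha' : ∀ ν, a' ν ≠ 0)
    (h : ∀ i : ℕ, i < 2 * T →
      ∑ ν : Fin T, a ν * lam ν ^ i = ∑ ν : Fin T, a' ν * lam' ν ^ i) :
    Set.range (fun ν => (a ν, lam ν)) = Set.range (fun ν => (a' ν, lam' ν)) := by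
  apply Set.Subset.antisymm
  · exact stmt_18_subset F T a lam a' lam' hlam hlam' ha h
  · exact stmt_18_subset F T a' lam' a lam hlam' hlam ha' (fun i hi => (h i hi).symm)
end
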